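/- arXiv:2504.11284 — 4 statements merged into one kernel-verified Lean document; each statement's English description precedes it below -/
import Mathlib

section
/- For a binary-label distribution D with class-probability function η and prior π ∈ (0,1), any Bayes-optimal scorer f* maximizing the bipartite AUC satisfies: for all x, x', if η(x) > η(x') then f*(x) > f*(x'). -/
open Finset

/-- `H(z) = 1(z>0) + (1/2)·1(z=0)` -/
noncomputable def H (z : ℝ) : ℝ := if 0 < z then 1 else if z = 0 then 1/2 else 0

/-- Any Bayes-optimal scorer for the bipartite AUC preserves the ordering of `η`. -/
theorem stmt3 {X : Type*} [Fintype X]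
    (μ : X → ℝ) (hμpos : ∀ x, 0 < μ x) (hμ1 : ∑ x, μ x = 1)
    (η : X → ℝ) (hη : ∀ x, 0 ≤ η x ∧ η x ≤ 1)
    (π : ℝ) (hπ : π = ∑ x, μ x * η x) (hπ0 : 0 < π) (hπ1 : π < 1)
    (AUC : (X → ℝ) → ℝ)
    (hAUC : ∀ f, AUC f =
      (∑ x, ∑ x', (μ x * η x) * (μ x' * (1 - η x')) * H (f x - f x')) /
        (π * (1 - π)))
    (f' : X → ℝ) (hopt : ∀ f : X → ℝ, AUC f ≤ AUC f')
    (x x' : X) (h : η x > η x') :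
    f' x > f' x' := by
  by_contra hcon
  push_neg at hcon
  have hD : 0 < π * (1 - π) := mul_pos hπ0 (by linarith)
  set w : X → X → ℝ := fun a b => (μ a * η a) * (μ b * (1 - η b)) with hw
  set P : (X → ℝ) → X → X → ℝ :=
    fun f a b => w a b * H (f a - f b) + w b a * H (f b - f a) with hP
  -- basic facts about H
  have Hnonneg : ∀ z : ℝ, 0 ≤ H z := by
    intro z; unfold H; split
    · norm_num
    · split <;> norm_num
  have Hle1 : ∀ z : ℝ, H z ≤ 1 := by
    intro z; unfold H; split
    · norm_num
    · split <;> norm_num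
  have Hpos : ∀ z : ℝ, 0 < z → H z = 1 := by
    intro z hz; simp [H, hz]
  have Hzneg : ∀ z : ℝ, z < 0 → H z = 0 := by
    intro z hz; simp [H, not_lt.2 hz.le, hz.ne]
  have Hhalf : ∀ z : ℝ, z ≤ 0 → H z ≤ 1/2 := by
    intro z hz
    rcases eq_or_lt_of_le hz with h0 | h0
    · simp [H, h0, not_lt.2 hz]
    · rw [Hzneg z h0]; norm_num
  have Hneg : ∀ z : ℝ, H (-z) = 1 - H z := by
    intro z
    rcases lt_trichotomy z 0 with h0 | h0 | h0
    · rw [Hzneg z h0, Hpos (-z) (by linarith)]; ring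
    · simp [h0, H]; norm_num
    · rw [Hpos z h0, Hzneg (-z) (by linarith)]; ring
  -- rewrite the pair contribution
  have erw : ∀ (g : X → ℝ) (a b : X),
      P g a b = w b a + (w a b - w b a) * H (g a - g b) := by
    intro g a b
    have : g b - g a = -(g a - g b) := by ring
    rw [hP]; dsimp only; rw [this, Hneg]; ring
  have hc : ∀ a b : X, w a b - w b a = μ a * μ b * (η a - η b) := by
    intro a b; simp only [hw]; ring
  -- pointwise: η's ordering maximizes each pair contribution
  have hpt : ∀ (f : X → ℝ) (a b : X), P f a b ≤ P η a b := by
    intro f a b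
    rw [erw f a b, erw η a b]
    have hcab := hc a b
    rcases lt_trichotomy (η a) (η b) with h0 | h0 | h0
    · have hcneg : w a b - w b a ≤ 0 := by
        rw [hcab]
        have := (mul_pos (hμpos a) (hμpos b))
        nlinarith
      rw [Hzneg (η a - η b) (by linarith)]
      have : (w a b - w b a) * H (f a - f b) ≤ 0 :=
        mul_nonpos_of_nonpos_of_nonneg hcneg (Hnonneg _)
      nlinarith
    · have : w a b - w b a = 0 := by rw [hcab, h0]; ring
      rw [this]; simp
    · have hcpos : 0 ≤ w a b - w b a := by
        rw [hcab]
        have := (mul_pos (hμpos a) (hμpos b))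
        nlinarith
      rw [Hpos (η a - η b) (by linarith)]
      nlinarith [Hle1 (f a - f b), mul_le_mul_of_nonneg_left (Hle1 (f a - f b)) hcpos]
  -- strict inequality at the pair (x, x')
  have hstrict : P f' x x' < P η x x' := by
    rw [erw f' x x', erw η x x']
    have hcpos : 0 < w x x' - w x' x := by
      rw [hc x x']
      have := mul_pos (hμpos x) (hμpos x')
      nlinarith
    rw [Hpos (η x - η x') (by linarith)]
    have h1 : H (f' x - f' x') ≤ 1/2 := Hhalf _ (by linarith)
    nlinarith [Hnonneg (f' x - f' x')]
  -- sum comparison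
  have hsum_lt : ∑ a, ∑ b, P f' a b < ∑ a, ∑ b, P η a b := by
    refine Finset.sum_lt_sum (fun a _ => Finset.sum_le_sum fun b _ => hpt f' a b)
      ⟨x, Finset.mem_univ x, Finset.sum_lt_sum (fun b _ => hpt f' x b)
        ⟨x', Finset.mem_univ x', hstrict⟩⟩
  -- relate ∑∑ P f to the AUC numerator
  have hPsum : ∀ f : X → ℝ,
      ∑ a, ∑ b, P f a b = 2 * ∑ a, ∑ b, w a b * H (f a - f b) := by
    intro f
    have h1 : ∑ a, ∑ b, P f a b =
        (∑ a, ∑ b, w a b * H (f a - f b)) + ∑ a, ∑ b, w b a * H (f b - f a) := by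
      rw [← Finset.sum_add_distrib]
      congr 1; ext a
      rw [← Finset.sum_add_distrib]
    have h2 : ∑ a, ∑ b, w b a * H (f b - f a) =
        ∑ a, ∑ b, w a b * H (f a - f b) := by rw [Finset.sum_comm]
    rw [h1, h2]; ring
  -- optimality gives numerator comparison
  have hT : ∑ a, ∑ b, w a b * H (η a - η b) ≤ ∑ a, ∑ b, w a b * H (f' a - f' b) := by
    have hle := hopt η
    rw [hAUC η, hAUC f'] at hle
    exact (div_le_div_iff_of_pos_right hD).mp hle
  have h1 := hPsum f'
  have h2 := hPsum η
  rw [h1, h2] at hsum_lt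
  linarith
end

section
/- Let D^(1), ..., D^(K) be binary-label distributions sharing a common marginal μ on X, with class-probability functions η^(k) and priors π^(k) ∈ (0,1), and let a_1,...,a_K ≥ 0 (not all zero). Any scorer f* maximizing the loss-aggregated AUC, AUC_LoA(f) = Σ_k a_k · E[H(f(X)-f(X')) | Y^(k) > Y'^(k)], satisfies: γ(x) > γ(x') implies f*(x) > f*(x'), where γ(x) = (1/K) Σ_k (a_k / (π^(k)·(1-π^(k)))) · η^(k)(x). -/
open Finset

lemma H_nonneg (z : ℝ) : 0 ≤ H z := by unfold H; split_ifs <;> norm_num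

lemma H_le_one (z : ℝ) : H z ≤ 1 := by unfold H; split_ifs <;> norm_num

lemma H_of_pos {z : ℝ} (h : 0 < z) : H z = 1 := if_pos h

lemma H_of_neg {z : ℝ} (h : z < 0) : H z = 0 := by
  unfold H; rw [if_neg (by linarith), if_neg (by linarith)]

lemma H_of_nonpos {z : ℝ} (h : z ≤ 0) : H z ≤ 1/2 := by
  unfold H; split_ifs with h1 h2
  · linarith
  · norm_num
  · norm_num

lemma H_add_neg (z : ℝ) : H z + H (-z) = 1 := by
  unfold H
  rcases lt_trichotomy 0 z with h | h | h
  · rw [if_pos h, if_neg (by linarith), if_neg (by linarith)]; ring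
  · rw [if_neg (by linarith), if_pos h.symm, if_neg (by linarith), if_pos (by linarith)]; ring
  · rw [if_neg (by linarith), if_neg (by linarith), if_pos (by linarith)]; ring

/-- Any maximizer of the loss-aggregated AUC preserves the ordering of
`γ(x) = (1/K) Σ_k (a_k/(π^(k)(1-π^(k)))) η^(k)(x)`. -/
theorem stmt4 {X : Type*} [Fintype X] {K : ℕ} (hK : 0 < K)
    (μ : X → ℝ) (hμpos : ∀ x, 0 < μ x) (hμ1 : ∑ x, μ x = 1)
    (η : Fin K → X → ℝ) (hη : ∀ k x, 0 ≤ η k x ∧ η k x ≤ 1)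
    (π : Fin K → ℝ) (hπ : ∀ k, π k = ∑ x, μ x * η k x)
    (hπ0 : ∀ k, 0 < π k) (hπ1 : ∀ k, π k < 1)
    (a : Fin K → ℝ) (ha : ∀ k, 0 ≤ a k) (ha' : ∃ k, a k ≠ 0)
    (AUCLoA : (X → ℝ) → ℝ)
    (hA : ∀ f, AUCLoA f = ∑ k, a k *
      ((∑ x, ∑ x', (μ x * η k x) * (μ x' * (1 - η k x')) * H (f x - f x')) /
        (π k * (1 - π k))))
    (f' : X → ℝ) (hopt : ∀ f : X → ℝ, AUCLoA f ≤ AUCLoA f')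
    (γ : X → ℝ)
    (hγ : ∀ x, γ x = (1 / (K : ℝ)) * ∑ k, (a k / (π k * (1 - π k))) * η k x)
    (x x' : X) (h : γ x > γ x') :
    f' x > f' x' := by
  by_contra hc
  push_neg at hc
  have hKpos : (0:ℝ) < K := Nat.cast_pos.mpr hK
  have hKne : (K:ℝ) ≠ 0 := ne_of_gt hKpos
  set c : X → X → ℝ := fun u v =>
    ∑ k, (a k / (π k * (1 - π k))) * ((μ u * η k u) * (μ v * (1 - η k v))) with hcdef
  -- Step 1: AUCLoA as double sum
  have hAUC : ∀ f, AUCLoA f = ∑ u, ∑ v, c u v * H (f u - f v) := by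
    intro f
    rw [hA]
    calc ∑ k, a k * ((∑ u, ∑ v, (μ u * η k u) * (μ v * (1 - η k v)) * H (f u - f v)) /
          (π k * (1 - π k)))
        = ∑ k, ∑ u, ∑ v, (a k / (π k * (1 - π k))) *
            ((μ u * η k u) * (μ v * (1 - η k v))) * H (f u - f v) := by
          apply Finset.sum_congr rfl; intro k _
          rw [show a k * ((∑ u, ∑ v, (μ u * η k u) * (μ v * (1 - η k v)) * H (f u - f v)) /
            (π k * (1 - π k))) = (a k / (π k * (1 - π k))) *
            (∑ u, ∑ v, (μ u * η k u) * (μ v * (1 - η k v)) * H (f u - f v)) from by ring,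
            Finset.mul_sum]
          apply Finset.sum_congr rfl; intro u _
          rw [Finset.mul_sum]
          exact Finset.sum_congr rfl (fun v _ => by ring)
      _ = ∑ u, ∑ k, ∑ v, (a k / (π k * (1 - π k))) *
            ((μ u * η k u) * (μ v * (1 - η k v))) * H (f u - f v) := Finset.sum_comm
      _ = ∑ u, ∑ v, ∑ k, (a k / (π k * (1 - π k))) *
            ((μ u * η k u) * (μ v * (1 - η k v))) * H (f u - f v) :=
          Finset.sum_congr rfl (fun u _ => Finset.sum_comm)
      _ = ∑ u, ∑ v, c u v * H (f u - f v) := by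
          apply Finset.sum_congr rfl; intro u _
          apply Finset.sum_congr rfl; intro v _
          rw [hcdef, Finset.sum_mul]
  -- Step 2: antisymmetrized coefficient
  have hcdiff : ∀ u v, c u v - c v u = μ u * μ v * ((K:ℝ) * (γ u - γ v)) := by
    intro u v
    have hKγ : (K:ℝ) * (γ u - γ v)
        = ∑ k, (a k / (π k * (1 - π k))) * (η k u - η k v) := by
      rw [hγ u, hγ v, ← mul_sub, ← mul_assoc, mul_one_div_cancel hKne, one_mul,
        ← Finset.sum_sub_distrib]
      exact Finset.sum_congr rfl (fun k _ => by ring)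
    rw [hKγ, hcdef, ← Finset.sum_sub_distrib, Finset.mul_sum]
    exact Finset.sum_congr rfl (fun k _ => by ring)
  -- Step 3: antisymmetry of the H-differences
  have hanti : ∀ u v : X, H (γ v - γ u) - H (f' v - f' u)
      = -(H (γ u - γ v) - H (f' u - f' v)) := by
    intro u v
    have h1 := H_add_neg (γ u - γ v)
    have h2 := H_add_neg (f' u - f' v)
    have e1 : γ v - γ u = -(γ u - γ v) := by ring
    have e2 : f' v - f' u = -(f' u - f' v) := by ring
    rw [e1, e2]; linarith
  -- Step 4: the difference of AUCs
  set T : ℝ := ∑ u, ∑ v, c u v * (H (γ u - γ v) - H (f' u - f' v)) with hTdef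
  have hT1 : AUCLoA γ - AUCLoA f' = T := by
    rw [hAUC γ, hAUC f', hTdef, ← Finset.sum_sub_distrib]
    apply Finset.sum_congr rfl; intro u _
    rw [← Finset.sum_sub_distrib]
    exact Finset.sum_congr rfl (fun v _ => by ring)
  have hT2 : T = -∑ u, ∑ v, c v u * (H (γ u - γ v) - H (f' u - f' v)) := by
    have e1 : T = ∑ v, ∑ u, c v u * (H (γ v - γ u) - H (f' v - f' u)) := rfl
    rw [e1, Finset.sum_comm, ← Finset.sum_neg_distrib]
    apply Finset.sum_congr rfl; intro u _
    rw [← Finset.sum_neg_distrib]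
    apply Finset.sum_congr rfl; intro v _
    rw [hanti u v]; ring
  have h2T : 2 * T = ∑ u, ∑ v, (c u v - c v u) * (H (γ u - γ v) - H (f' u - f' v)) := by
    have : 2 * T = T - (-T) := by ring
    rw [this]
    nth_rewrite 2 [hT2]
    rw [neg_neg, hTdef, ← Finset.sum_sub_distrib]
    apply Finset.sum_congr rfl; intro u _
    rw [← Finset.sum_sub_distrib]
    exact Finset.sum_congr rfl (fun v _ => by ring)
  -- Step 5: positivity of each term
  have hterm : ∀ u v : X, 0 ≤ (c u v - c v u) * (H (γ u - γ v) - H (f' u - f' v)) := by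
    intro u v
    rw [hcdiff u v]
    rcases lt_trichotomy (γ u - γ v) 0 with hd | hd | hd
    · have h1 : H (γ u - γ v) = 0 := H_of_neg hd
      have h2 : 0 ≤ H (f' u - f' v) := H_nonneg _
      have hfac : μ u * μ v * ((K:ℝ) * (γ u - γ v)) ≤ 0 := by
        apply mul_nonpos_of_nonneg_of_nonpos
        · exact le_of_lt (mul_pos (hμpos u) (hμpos v))
        · exact mul_nonpos_of_nonneg_of_nonpos (le_of_lt hKpos) (le_of_lt hd)
      have hΔ : H (γ u - γ v) - H (f' u - f' v) ≤ 0 := by rw [h1]; linarith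
      nlinarith [mul_nonneg (neg_nonneg.mpr hfac) (neg_nonneg.mpr hΔ)]
    · rw [hd]; ring_nf; simp [hd]
    · have h1 : H (γ u - γ v) = 1 := H_of_pos hd
      have h2 : H (f' u - f' v) ≤ 1 := H_le_one _
      apply mul_nonneg
      · exact le_of_lt (mul_pos (mul_pos (hμpos u) (hμpos v)) (mul_pos hKpos hd))
      · rw [h1]; linarith
  have hxx : 0 < (c x x' - c x' x) * (H (γ x - γ x') - H (f' x - f' x')) := by
    rw [hcdiff x x']
    have h1 : H (γ x - γ x') = 1 := H_of_pos (by linarith)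
    have h2 : H (f' x - f' x') ≤ 1/2 := H_of_nonpos (by linarith)
    apply mul_pos
    · have hd : (0:ℝ) < γ x - γ x' := by linarith
      exact mul_pos (mul_pos (hμpos x) (hμpos x')) (mul_pos hKpos hd)
    · rw [h1]; linarith
  have hpos : 0 < ∑ u, ∑ v, (c u v - c v u) * (H (γ u - γ v) - H (f' u - f' v)) := by
    apply Finset.sum_pos'
    · intro u _
      exact Finset.sum_nonneg (fun v _ => hterm u v)
    · refine ⟨x, Finset.mem_univ x, ?_⟩
      apply Finset.sum_pos'
      · intro v _; exact hterm x v
      · exact ⟨x', Finset.mem_univ x', hxx⟩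
  have hTpos : 0 < T := by linarith [h2T ▸ hpos]
  have : AUCLoA f' < AUCLoA γ := by linarith
  exact absurd (hopt γ) (not_le.mpr this)
end

section
/- Consider K binary labels with aggregated label Ȳ = Σ_k Y^(k) and costs c_{ȳȳ'} = 1(ȳ > ȳ')·|ȳ - ȳ'|. Any Bayes-optimal scorer f* for the label-aggregated AUC (the multipartite AUC on Ȳ with these costs) satisfies: γ(x) > γ(x') implies f*(x) > f*(x'), where γ(x) = Σ_{k∈[K]} η^(k)(x). -/
open Finset

lemma H_pos (z : ℝ) (h : 0 < z) : H z = 1 := by unfold H; split_ifs <;> simp_all <;> linarith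
lemma H_neg' (z : ℝ) (h : z < 0) : H z = 0 := by unfold H; split_ifs <;> simp_all <;> linarith
lemma H_half (z : ℝ) (h : z ≤ 0) : H z ≤ 1/2 := by unfold H; split_ifs <;> simp_all <;> linarith

lemma H_sub_neg (z : ℝ) : H (-z) = 1 - H z := by have := H_add_neg z; linarith

lemma two_mul_H_sum {X : Type*} [Fintype X] (S : X → X → ℝ) (f : X → ℝ) :
    2 * (∑ a, ∑ b, S a b * H (f a - f b)) =
      (∑ a, ∑ b, S a b) + ∑ a, ∑ b, (S a b - S b a) * H (f a - f b) := by
  have hswap : (∑ a, ∑ b, S a b * H (f a - f b)) = ∑ a, ∑ b, S b a * H (f b - f a) :=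
    Finset.sum_comm
  have hconst : (∑ a, ∑ b, S b a) = ∑ a, ∑ b, S a b := Finset.sum_comm
  calc 2 * (∑ a, ∑ b, S a b * H (f a - f b))
      = (∑ a, ∑ b, S a b * H (f a - f b)) + ∑ a, ∑ b, S b a * H (f b - f a) := by
        rw [← hswap]; ring
    _ = ∑ a, ∑ b, (S a b * H (f a - f b) + S b a * H (f b - f a)) := by
        rw [← Finset.sum_add_distrib]
        exact Finset.sum_congr rfl fun a _ => (Finset.sum_add_distrib).symm
    _ = ∑ a, ∑ b, (S b a + (S a b - S b a) * H (f a - f b)) := by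
        refine Finset.sum_congr rfl fun a _ => Finset.sum_congr rfl fun b _ => ?_
        have h3 : H (f b - f a) = 1 - H (f a - f b) := by
          rw [show f b - f a = -(f a - f b) by ring, H_sub_neg]
        rw [h3]; ring
    _ = (∑ a, ∑ b, S b a) + ∑ a, ∑ b, (S a b - S b a) * H (f a - f b) := by
        rw [← Finset.sum_add_distrib]
        exact Finset.sum_congr rfl fun a _ => Finset.sum_add_distrib
    _ = _ := by rw [hconst]



lemma two_mul_H_sum_anti {X : Type*} [Fintype X] (e : X → X → ℝ)
    (he : ∀ a b, e b a = -e a b) (f : X → ℝ) :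
    2 * (∑ a, ∑ b, e a b * H (f a - f b)) =
      ∑ a, ∑ b, e a b * (H (f a - f b) - H (f b - f a)) := by
  have hswap : (∑ a, ∑ b, e a b * H (f a - f b)) = ∑ a, ∑ b, e b a * H (f b - f a) :=
    Finset.sum_comm
  calc 2 * (∑ a, ∑ b, e a b * H (f a - f b))
      = (∑ a, ∑ b, e a b * H (f a - f b)) + ∑ a, ∑ b, e b a * H (f b - f a) := by
        rw [← hswap]; ring
    _ = ∑ a, ∑ b, (e a b * H (f a - f b) + e b a * H (f b - f a)) := by
        rw [← Finset.sum_add_distrib]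
        exact Finset.sum_congr rfl fun a _ => (Finset.sum_add_distrib).symm
    _ = _ := by
        refine Finset.sum_congr rfl fun a _ => Finset.sum_congr rfl fun b _ => ?_
        rw [he a b]; ring

lemma Hdiff_le (m z w : ℝ) (hm : 0 ≤ m) :
    m * z * (H w - H (-w)) ≤ m * z * (H z - H (-z)) := by
  have h1 := H_nonneg w; have h2 := H_le_one w
  have h3 := H_nonneg (-w); have h4 := H_le_one (-w)
  rcases lt_trichotomy 0 z with hz | hz | hz
  · rw [H_pos z hz, H_neg' (-z) (by linarith)]
    nlinarith [mul_nonneg (mul_nonneg hm hz.le) (by linarith : (0:ℝ) ≤ 1 - (H w - H (-w)))]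
  · rw [← hz]; ring_nf; simp
  · rw [H_neg' z hz, H_pos (-z) (by linarith)]
    nlinarith [mul_nonneg (mul_nonneg hm (by linarith : (0:ℝ) ≤ -z))
      (by linarith : (0:ℝ) ≤ (H w - H (-w)) + 1)]

/-- Any Bayes-optimal scorer for the label-aggregated AUC with costs
`c_{n n'} = 1(n > n')·(n - n')` preserves the ordering of `γ(x) = Σ_k η^(k)(x)`. -/
theorem stmt7 {X : Type*} [Fintype X] {K : ℕ}
    (μ : X → ℝ) (hμpos : ∀ x, 0 < μ x) (hμ1 : ∑ x, μ x = 1)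
    (q : X → (Fin K → Bool) → ℝ)
    (hq : ∀ x y, 0 ≤ q x y) (hq1 : ∀ x, ∑ y, q x y = 1)
    (ηbar : X → ℕ → ℝ)
    (hbar : ∀ x n, ηbar x n =
      ∑ y, if (∑ k, if y k then 1 else 0) = n then q x y else 0)
    (c : ℕ → ℕ → ℝ)
    (hc : ∀ n n', c n n' = if n' < n then (n : ℝ) - (n' : ℝ) else 0)
    (Z : ℝ)
    (hZ : Z = ∑ x, ∑ x', μ x * μ x' *
      ∑ n ∈ Finset.range (K + 1), ∑ n' ∈ Finset.range (K + 1),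
        (if n' < n then (1 : ℝ) else 0) * ηbar x n * ηbar x' n')
    (hZ0 : 0 < Z)
    (AUCLaA : (X → ℝ) → ℝ)
    (hA : ∀ f, AUCLaA f = (∑ x, ∑ x', μ x * μ x' *
      ∑ n ∈ Finset.range (K + 1), ∑ n' ∈ Finset.range (K + 1),
        c n n' * ηbar x n * ηbar x' n' * H (f x - f x')) / Z)
    (f' : X → ℝ) (hopt : ∀ f : X → ℝ, AUCLaA f ≤ AUCLaA f')
    (γ : X → ℝ) (hγ : ∀ x, γ x = ∑ k, ∑ y, if y k then q x y else 0)
    (x x' : X) (h : γ x > γ x') :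
    f' x > f' x' := by
  by_contra hcon
  push_neg at hcon
  -- N y = number of true coordinates
  set N : (Fin K → Bool) → ℕ := fun y => ∑ k, if y k then 1 else 0 with hNdef
  have hNmem : ∀ y, N y ∈ Finset.range (K + 1) := by
    intro y
    rw [Finset.mem_range, Nat.lt_succ_iff]
    calc N y ≤ ∑ _k : Fin K, 1 := Finset.sum_le_sum (fun k _ => by split_ifs <;> omega)
      _ = K := by simp
  -- ηbar sums to 1
  have sum1 : ∀ a, ∑ n ∈ Finset.range (K + 1), ηbar a n = 1 := by
    intro a
    simp only [hbar]
    rw [Finset.sum_comm]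
    rw [show (∑ y, ∑ n ∈ Finset.range (K + 1), if N y = n then q a y else 0)
        = ∑ y, q a y from Finset.sum_congr rfl fun y _ => by
          rw [Finset.sum_ite_eq (Finset.range (K + 1)) (N y) (fun _ => q a y),
            if_pos (hNmem y)]]
    exact hq1 a
  -- first moment of ηbar is γ
  have sumn : ∀ a, ∑ n ∈ Finset.range (K + 1), (n : ℝ) * ηbar a n = γ a := by
    intro a
    simp only [hbar, Finset.mul_sum, mul_ite, mul_zero]
    rw [Finset.sum_comm]
    rw [show (∑ y, ∑ n ∈ Finset.range (K + 1), if N y = n then (n : ℝ) * q a y else 0)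
        = ∑ y, (N y : ℝ) * q a y from Finset.sum_congr rfl fun y _ => by
          rw [Finset.sum_ite_eq (Finset.range (K + 1)) (N y) (fun n => (n : ℝ) * q a y),
            if_pos (hNmem y)]]
    rw [hγ, Finset.sum_comm]
    refine Finset.sum_congr rfl fun y _ => ?_
    have : (∑ k, if y k then q a y else 0) = (∑ k, if y k then (1:ℝ) else 0) * q a y := by
      rw [Finset.sum_mul]
      exact Finset.sum_congr rfl fun k _ => by split_ifs <;> ring
    rw [this]
    congr 1
    rw [hNdef]
    push_cast
    exact Finset.sum_congr rfl fun k _ => by split_ifs <;> norm_num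
  -- W and its antisymmetry
  have hWanti : ∀ a b,
      (∑ n ∈ Finset.range (K + 1), ∑ n' ∈ Finset.range (K + 1),
        c n n' * ηbar a n * ηbar b n')
      - (∑ n ∈ Finset.range (K + 1), ∑ n' ∈ Finset.range (K + 1),
        c n n' * ηbar b n * ηbar a n') = γ a - γ b := by
    intro a b
    have hswap : (∑ n ∈ Finset.range (K + 1), ∑ n' ∈ Finset.range (K + 1),
        c n n' * ηbar b n * ηbar a n') = ∑ n ∈ Finset.range (K + 1), ∑ n' ∈ Finset.range (K + 1),
        c n' n * ηbar b n' * ηbar a n := Finset.sum_comm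
    rw [hswap]
    rw [← Finset.sum_sub_distrib]
    rw [show (∑ n ∈ Finset.range (K + 1),
          ((∑ n' ∈ Finset.range (K + 1), c n n' * ηbar a n * ηbar b n')
            - ∑ n' ∈ Finset.range (K + 1), c n' n * ηbar b n' * ηbar a n))
        = ∑ n ∈ Finset.range (K + 1), ∑ n' ∈ Finset.range (K + 1),
            ((n : ℝ) - (n' : ℝ)) * (ηbar a n * ηbar b n') from
      Finset.sum_congr rfl fun n _ => by
        rw [← Finset.sum_sub_distrib]
        refine Finset.sum_congr rfl fun n' _ => ?_
        have hcc : c n n' - c n' n = (n : ℝ) - (n' : ℝ) := by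
          rw [hc, hc]
          rcases lt_trichotomy n n' with hh | hh | hh
          · rw [if_neg (by omega), if_pos hh]; ring
          · subst hh; simp
          · rw [if_pos hh, if_neg (by omega)]; ring
        linear_combination ηbar a n * ηbar b n' * hcc]
    rw [show (∑ n ∈ Finset.range (K+1), ∑ n' ∈ Finset.range (K+1),
          ((n:ℝ) - (n':ℝ)) * (ηbar a n * ηbar b n'))
        = (∑ n ∈ Finset.range (K+1), (n:ℝ) * ηbar a n) * (∑ n' ∈ Finset.range (K+1), ηbar b n')
          - (∑ n ∈ Finset.range (K+1), ηbar a n) * (∑ n' ∈ Finset.range (K+1), (n':ℝ) * ηbar b n') from by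
      rw [Finset.sum_mul_sum, Finset.sum_mul_sum, ← Finset.sum_sub_distrib]
      refine Finset.sum_congr rfl fun n _ => ?_
      rw [← Finset.sum_sub_distrib]
      exact Finset.sum_congr rfl fun n' _ => by ring]
    rw [sum1, sumn, sum1, sumn]
    ring
  -- the kernel of the AUC
  have hA' : ∀ f : X → ℝ, AUCLaA f = (∑ a, ∑ b,
      (μ a * μ b * (∑ n ∈ Finset.range (K + 1), ∑ n' ∈ Finset.range (K + 1),
        c n n' * ηbar a n * ηbar b n')) * H (f a - f b)) / Z := by
    intro f
    rw [hA]
    congr 1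
    refine Finset.sum_congr rfl fun a _ => Finset.sum_congr rfl fun b _ => ?_
    have hout : (∑ n ∈ Finset.range (K + 1), ∑ n' ∈ Finset.range (K + 1),
        c n n' * ηbar a n * ηbar b n' * H (f a - f b))
        = (∑ n ∈ Finset.range (K + 1), ∑ n' ∈ Finset.range (K + 1),
            c n n' * ηbar a n * ηbar b n') * H (f a - f b) := by
      rw [Finset.sum_mul]
      exact Finset.sum_congr rfl fun n _ => by rw [Finset.sum_mul]
    rw [hout]; ring
  -- abbreviations
  set d : X → X → ℝ := fun a b => μ a * μ b * (γ a - γ b) with hddef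
  have hdanti : ∀ a b, d b a = -d a b := by intro a b; simp only [hddef]; ring
  have hdS : ∀ a b, (μ a * μ b * (∑ n ∈ Finset.range (K + 1), ∑ n' ∈ Finset.range (K + 1),
        c n n' * ηbar a n * ηbar b n'))
      - (μ b * μ a * (∑ n ∈ Finset.range (K + 1), ∑ n' ∈ Finset.range (K + 1),
        c n n' * ηbar b n * ηbar a n')) = d a b := by
    intro a b
    simp only [hddef]
    linear_combination μ a * μ b * hWanti a b
  -- symmetrized form of the kernel
  have hsym : ∀ f : X → ℝ, 2 * (∑ a, ∑ b,
      (μ a * μ b * (∑ n ∈ Finset.range (K + 1), ∑ n' ∈ Finset.range (K + 1),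
        c n n' * ηbar a n * ηbar b n')) * H (f a - f b))
      = (∑ a, ∑ b, μ a * μ b * (∑ n ∈ Finset.range (K + 1), ∑ n' ∈ Finset.range (K + 1),
        c n n' * ηbar a n * ηbar b n'))
        + ∑ a, ∑ b, d a b * H (f a - f b) := by
    intro f
    rw [two_mul_H_sum (fun a b => μ a * μ b * (∑ n ∈ Finset.range (K + 1),
        ∑ n' ∈ Finset.range (K + 1), c n n' * ηbar a n * ηbar b n')) f]
    congr 1
    exact Finset.sum_congr rfl fun a _ => Finset.sum_congr rfl fun b _ => by rw [hdS a b]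
  -- strict comparison of the antisymmetric part
  have hTlt : (∑ a, ∑ b, d a b * H (f' a - f' b)) < ∑ a, ∑ b, d a b * H (γ a - γ b) := by
    have h2f : 2 * (∑ a, ∑ b, d a b * H (f' a - f' b))
        = ∑ a, ∑ b, d a b * (H (f' a - f' b) - H (f' b - f' a)) :=
      two_mul_H_sum_anti d hdanti f'
    have h2g : 2 * (∑ a, ∑ b, d a b * H (γ a - γ b))
        = ∑ a, ∑ b, d a b * (H (γ a - γ b) - H (γ b - γ a)) :=
      two_mul_H_sum_anti d hdanti γ
    have key : (∑ a, ∑ b, d a b * (H (f' a - f' b) - H (f' b - f' a)))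
        < ∑ a, ∑ b, d a b * (H (γ a - γ b) - H (γ b - γ a)) := by
      rw [← Finset.sum_product', ← Finset.sum_product']
      refine Finset.sum_lt_sum (fun p _ => ?_) ⟨(x, x'), Finset.mem_univ _, ?_⟩
      · obtain ⟨a, b⟩ := p
        simp only [hddef]
        rw [show f' b - f' a = -(f' a - f' b) by ring,
          show γ b - γ a = -(γ a - γ b) by ring]
        exact Hdiff_le (μ a * μ b) (γ a - γ b) (f' a - f' b)
          (le_of_lt (mul_pos (hμpos a) (hμpos b)))
      · simp only [hddef]
        have hz : 0 < γ x - γ x' := by linarith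
        have hm : 0 < μ x * μ x' := mul_pos (hμpos x) (hμpos x')
        rw [H_pos _ hz, H_neg' _ (by linarith : γ x' - γ x < 0)]
        have hw1 : H (f' x - f' x') ≤ 1/2 := H_half _ (by linarith)
        have hw2 : H (f' x' - f' x) = 1 - H (f' x - f' x') := by
          rw [show f' x' - f' x = -(f' x - f' x') by ring, H_sub_neg]
        have hfac : H (f' x - f' x') - H (f' x' - f' x) ≤ 0 := by rw [hw2]; linarith
        have hL : μ x * μ x' * (γ x - γ x') * (H (f' x - f' x') - H (f' x' - f' x)) ≤ 0 :=
          mul_nonpos_of_nonneg_of_nonpos (le_of_lt (mul_pos hm hz)) hfac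
        nlinarith [mul_pos hm hz]
    linarith
  -- contradiction with optimality
  have hle := hopt γ
  rw [hA' γ, hA' f'] at hle
  have hle2 : (∑ a, ∑ b,
      (μ a * μ b * (∑ n ∈ Finset.range (K + 1), ∑ n' ∈ Finset.range (K + 1),
        c n n' * ηbar a n * ηbar b n')) * H (γ a - γ b))
      ≤ (∑ a, ∑ b,
      (μ a * μ b * (∑ n ∈ Finset.range (K + 1), ∑ n' ∈ Finset.range (K + 1),
        c n n' * ηbar a n * ηbar b n')) * H (f' a - f' b)) := by
    have h0 := mul_le_mul_of_nonneg_right hle (le_of_lt hZ0)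
    rw [div_mul_cancel₀ _ (ne_of_gt hZ0), div_mul_cancel₀ _ (ne_of_gt hZ0)] at h0
    exact h0
  have e1 := hsym γ
  have e2 := hsym f'
  linarith
end

section
/- Let K = 2 with deterministic binary labels, i.e., η^(1)(x), η^(2)(x) ∈ {0,1} for all x. For weights α^(1), α^(2) > 0 with α^(1) > α^(2), any scorer f* that preserves the ordering of x ↦ α^(1)·η^(1)(x) + α^(2)·η^(2)(x) satisfies: η^(1)(x) > η^(1)(x') implies f*(x) > f*(x'). Symmetrically, if α^(2) > α^(1), then η^(2)(x) > η^(2)(x') implies f*(x) > f*(x'). -/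
/-- Label dictatorship for loss aggregation with two deterministic labels. -/
theorem stmt8 {X : Type*}
    (η1 η2 : X → ℝ)
    (h1 : ∀ x, η1 x = 0 ∨ η1 x = 1) (h2 : ∀ x, η2 x = 0 ∨ η2 x = 1)
    (α1 α2 : ℝ) (hα1 : 0 < α1) (hα2 : 0 < α2)
    (f' : X → ℝ)
    (hord : ∀ x x' : X,
      α1 * η1 x + α2 * η2 x > α1 * η1 x' + α2 * η2 x' → f' x > f' x') :
    (α1 > α2 → ∀ x x' : X, η1 x > η1 x' → f' x > f' x') ∧
    (α2 > α1 → ∀ x x' : X, η2 x > η2 x' → f' x > f' x') := by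
  constructor
  · intro hgt x x' hx
    apply hord
    rcases h1 x with e1 | e1 <;> rcases h1 x' with e2 | e2 <;>
      rcases h2 x with e3 | e3 <;> rcases h2 x' with e4 | e4 <;>
      rw [e1, e2, e3, e4] <;> linarith [e1, e2, e3, e4, hx]
  · intro hgt x x' hx
    apply hord
    rcases h1 x with e1 | e1 <;> rcases h1 x' with e2 | e2 <;>
      rcases h2 x with e3 | e3 <;> rcases h2 x' with e4 | e4 <;>
      rw [e1, e2, e3, e4] <;> linarith [e1, e2, e3, e4, hx]
end
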